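/- arXiv:1511.00654 — 3 statements merged into one kernel-verified Lean document; each statement's English description precedes it below -/
import Mathlib

section
/- Let 0 < α < 1 and I = [0, T) with 0 < T ≤ ∞. Let b, g : I → ℝ be nonnegative functions on I and let u : I → ℝ be nonnegative and locally integrable on I. For an integer n ≥ 1, define H_n(t) = ∑_{i=0}^{n} C(n,i) · b(t)^{n−i} · g(t)^{i} · (Γ(α))^{i} / Γ(iα + n − i) · ∫₀ᵗ (t − s)^{iα + n − i − 1} u(s) ds. Then for every integer n with n ≥ 2/α and every t ∈ I, H_n(t) ≤ (Γ(α))^{n} · max{t^{nα−1}, t^{n}} / Γ(nα) · (b(t) + g(t))^{n} · ∫₀ᵗ u(s) ds. -/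
/-!
Every summand of `H_n(t)` is bounded by the same multiple of `∫₀ᵗ u`. Since `n ≥ 2/α`, each
exponent `q = iα + n − i − 1` lies in `[nα − 1, n − 1]` with `nα − 1 ≥ 1`, so
`(t − s)^q ≤ t^q ≤ max{t^{nα−1}, t^n}`. Because `Γ(α) ≥ 1` for `α ≤ 1` while `Γ` increases
on `[2, ∞)`, also `Γ(α)^i / Γ(iα + n − i) ≤ Γ(α)^n / Γ(nα)`. The binomial weights then sum
to `(b(t) + g(t))^n`.
-/

open MeasureTheory Real Finset

theorem Real.one_le_Gamma_of_le_one {x : ℝ} (hx0 : 0 < x) (hx1 : x ≤ 1) : 1 ≤ Gamma x :=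
  Gamma_one ▸ Gamma_strictAntiOn_Ioc.antitoneOn ⟨hx0, hx1⟩ ⟨one_pos, le_rfl⟩ hx1

theorem Real.rpow_le_max_rpow {t a q c : ℝ} (ht : 0 ≤ t) (hq : q ≠ 0) (haq : a ≤ q)
    (hqc : q ≤ c) : t ^ q ≤ max (t ^ a) (t ^ c) := by
  rcases le_or_gt 1 t with h1 | h1
  · exact le_max_of_le_right (rpow_le_rpow_of_exponent_le h1 hqc)
  rcases ht.eq_or_lt with rfl | h0
  · rw [zero_rpow hq]
    exact le_max_of_le_left (rpow_nonneg le_rfl a)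
  · exact le_max_of_le_left (rpow_le_rpow_of_exponent_ge h0 h1.le haq)

theorem intervalIntegral.integral_sub_rpow_mul_le {u : ℝ → ℝ} {t q : ℝ} (ht : 0 ≤ t)
    (hq : 0 ≤ q) (hu : ∀ s ∈ Set.Icc 0 t, 0 ≤ u s) (hui : IntervalIntegrable u volume 0 t) :
    ∫ s in 0..t, (t - s) ^ q * u s ≤ t ^ q * ∫ s in 0..t, u s := by
  have hcont : Continuous fun s : ℝ => (t - s) ^ q :=
    (continuous_rpow_const hq).comp (continuous_const.sub continuous_id)
  rw [← integral_const_mul]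
  refine integral_mono_on ht (hui.continuousOn_mul hcont.continuousOn) (hui.const_mul _)
    fun s hs => mul_le_mul_of_nonneg_right ?_ (hu s hs)
  exact rpow_le_rpow (by linarith [hs.2]) (by linarith [hs.1]) hq

theorem Real.Gamma_pow_div_Gamma_le {α : ℝ} (hα0 : 0 < α) (hα1 : α ≤ 1) {i n : ℕ}
    (hin : i ≤ n) (hnα : 2 ≤ n * α) :
    Gamma α ^ i / Gamma (i * α + n - i) ≤ Gamma α ^ n / Gamma (n * α) := by
  have hle : (n : ℝ) * α ≤ i * α + n - i := by
    have : (i : ℝ) ≤ n := by exact_mod_cast hin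
    nlinarith
  have hΓα := one_le_Gamma_of_le_one hα0 hα1
  rw [div_le_div_iff₀ (Gamma_pos_of_pos (by linarith)) (Gamma_pos_of_pos (by linarith))]
  exact mul_le_mul (pow_le_pow_right₀ hΓα hin)
    (Gamma_strictMonoOn_Ici.monotoneOn hnα (hnα.trans hle) hle)
    (Gamma_pos_of_pos (by linarith)).le (by positivity)

theorem Finset.sum_choose_mul_le_add_pow_mul {b g C : ℝ} (hb : 0 ≤ b) (hg : 0 ≤ g) {n : ℕ}
    {f : ℕ → ℝ} (hf : ∀ i ≤ n, f i ≤ C) :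
    ∑ i ∈ range (n + 1), (n.choose i : ℝ) * b ^ (n - i) * g ^ i * f i ≤
      (b + g) ^ n * C := by
  calc ∑ i ∈ range (n + 1), (n.choose i : ℝ) * b ^ (n - i) * g ^ i * f i
      ≤ ∑ i ∈ range (n + 1), (n.choose i : ℝ) * b ^ (n - i) * g ^ i * C :=
        sum_le_sum fun i hi =>
          mul_le_mul_of_nonneg_left (hf i (Nat.lt_succ_iff.mp (mem_range.mp hi))) (by positivity)
    _ = (b + g) ^ n * C := by
        rw [← sum_mul, add_comm b g, add_pow]
        congr 1
        exact sum_congr rfl fun i _ => by ring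

theorem Hn_summand_le {α : ℝ} (hα0 : 0 < α) (hα1 : α ≤ 1) {i n : ℕ} (hin : i ≤ n)
    (hnα : 2 ≤ n * α) {u : ℝ → ℝ} {t : ℝ} (ht : 0 ≤ t) (hu : ∀ s ∈ Set.Icc 0 t, 0 ≤ u s)
    (hui : IntervalIntegrable u volume 0 t) :
    Gamma α ^ i / Gamma (i * α + n - i) *
        ∫ s in 0..t, (t - s) ^ (i * α + n - i - 1) * u s ≤
      Gamma α ^ n * max (t ^ (n * α - 1)) (t ^ (n : ℝ)) / Gamma (n * α) *
        ∫ s in 0..t, u s := by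
  have hq : (n : ℝ) * α - 1 ≤ i * α + n - i - 1 := by
    have : (i : ℝ) ≤ n := by exact_mod_cast hin
    nlinarith
  have hpow : t ^ ((i : ℝ) * α + n - i - 1) ≤ max (t ^ (n * α - 1)) (t ^ (n : ℝ)) :=
    rpow_le_max_rpow ht (by linarith) hq (by nlinarith)
  have hI := intervalIntegral.integral_sub_rpow_mul_le (q := i * α + n - i - 1) ht
    (by linarith) hu hui
  have hI0 : 0 ≤ ∫ s in 0..t, (t - s) ^ ((i : ℝ) * α + n - i - 1) * u s :=
    intervalIntegral.integral_nonneg ht fun s hs =>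
      mul_nonneg (rpow_nonneg (by linarith [hs.2]) _) (hu s hs)
  have hU0 : 0 ≤ ∫ s in 0..t, u s := intervalIntegral.integral_nonneg ht hu
  calc _ ≤ Gamma α ^ n / Gamma (n * α) *
        (max (t ^ (n * α - 1)) (t ^ (n : ℝ)) * ∫ s in 0..t, u s) :=
        mul_le_mul (Gamma_pow_div_Gamma_le hα0 hα1 hin hnα)
          (hI.trans (mul_le_mul_of_nonneg_right hpow hU0)) hI0
          (div_nonneg (pow_nonneg (Gamma_pos_of_pos hα0).le n)
            (Gamma_pos_of_pos (by linarith)).le)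
    _ = _ := by ring

theorem Hn_bound_general
    (α : ℝ) (hα0 : 0 < α) (hα1 : α < 1)
    (T : EReal)
    (b g u : ℝ → ℝ)
    (hb_nonneg : ∀ t : ℝ, 0 ≤ t → (t : EReal) < T → 0 ≤ b t)
    (hg_nonneg : ∀ t : ℝ, 0 ≤ t → (t : EReal) < T → 0 ≤ g t)
    (hu_nonneg : ∀ t : ℝ, 0 ≤ t → (t : EReal) < T → 0 ≤ u t)
    (hu_int : ∀ t : ℝ, 0 ≤ t → (t : EReal) < T → IntervalIntegrable u volume 0 t) :
    ∀ n : ℕ, 1 ≤ n → 2 / α ≤ (n : ℝ) → ∀ t : ℝ, 0 ≤ t → (t : EReal) < T →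
      (∑ i ∈ Finset.range (n + 1),
        (n.choose i : ℝ) * b t ^ (n - i) * g t ^ i *
          Real.Gamma α ^ i / Real.Gamma ((i : ℝ) * α + (n : ℝ) - (i : ℝ)) *
          ∫ s in (0:ℝ)..t, (t - s) ^ ((i : ℝ) * α + (n : ℝ) - (i : ℝ) - 1) * u s) ≤
      Real.Gamma α ^ n * max (t ^ ((n : ℝ) * α - 1)) (t ^ (n : ℝ)) / Real.Gamma ((n : ℝ) * α) *
        (b t + g t) ^ n * ∫ s in (0:ℝ)..t, u s := by
  intro n _ hn t ht htT
  have hnα : 2 ≤ (n : ℝ) * α := (div_le_iff₀ hα0).mp hn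
  have hu : ∀ s ∈ Set.Icc 0 t, 0 ≤ u s := fun s hs =>
    hu_nonneg s hs.1 ((EReal.coe_le_coe_iff.mpr hs.2).trans_lt htT)
  calc _ = ∑ i ∈ range (n + 1), (n.choose i : ℝ) * b t ^ (n - i) * g t ^ i *
          (Gamma α ^ i / Gamma ((i : ℝ) * α + n - i) *
            ∫ s in 0..t, (t - s) ^ ((i : ℝ) * α + n - i - 1) * u s) :=
        sum_congr rfl fun i _ => by ring
    _ ≤ (b t + g t) ^ n * (Gamma α ^ n * max (t ^ ((n : ℝ) * α - 1)) (t ^ (n : ℝ)) /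
          Gamma (n * α) * ∫ s in 0..t, u s) :=
        sum_choose_mul_le_add_pow_mul (hb_nonneg t ht htT) (hg_nonneg t ht htT) fun i hi =>
          Hn_summand_le hα0 hα1.le hi hnα ht hu (hu_int t ht htT)
    _ = _ := by ring

/-- The bound on `H_n(t)` from the second claim in the proof of Theorem 2.1:
for `n ≥ 2/α`,
`H_n(t) ≤ Γ(α)^n · max{t^{nα−1}, t^n} / Γ(nα) · (b(t)+g(t))^n · ∫₀ᵗ u(s) ds`. -/
theorem Hn_bound
    (α : ℝ) (hα0 : 0 < α) (hα1 : α < 1)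
    (T : EReal) (hT : 0 < T)
    (b g u : ℝ → ℝ)
    (hb_nonneg : ∀ t : ℝ, 0 ≤ t → (t : EReal) < T → 0 ≤ b t)
    (hg_nonneg : ∀ t : ℝ, 0 ≤ t → (t : EReal) < T → 0 ≤ g t)
    (hu_nonneg : ∀ t : ℝ, 0 ≤ t → (t : EReal) < T → 0 ≤ u t)
    (hu_int : ∀ t : ℝ, 0 ≤ t → (t : EReal) < T → IntervalIntegrable u volume 0 t) :
    ∀ n : ℕ, 1 ≤ n → 2 / α ≤ (n : ℝ) → ∀ t : ℝ, 0 ≤ t → (t : EReal) < T →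
      (∑ i ∈ Finset.range (n + 1),
        (n.choose i : ℝ) * b t ^ (n - i) * g t ^ i *
          Real.Gamma α ^ i / Real.Gamma ((i : ℝ) * α + (n : ℝ) - (i : ℝ)) *
          ∫ s in (0:ℝ)..t, (t - s) ^ ((i : ℝ) * α + (n : ℝ) - (i : ℝ) - 1) * u s) ≤
      Real.Gamma α ^ n * max (t ^ ((n : ℝ) * α - 1)) (t ^ (n : ℝ)) / Real.Gamma ((n : ℝ) * α) *
        (b t + g t) ^ n * ∫ s in (0:ℝ)..t, u s :=
  Hn_bound_general α hα0 hα1 T b g u hb_nonneg hg_nonneg hu_nonneg hu_int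
end

section
/- Let 0 < α < 1 and I = [0, T) with 0 < T ≤ ∞. Let b, g : I → ℝ be nonnegative, nondecreasing, continuous functions on I. For t ∈ I and τ ≥ 0, the double series L(t; τ) = ∑_{n=0}^{∞} ∑_{i=0}^{n} C(n,i) · b(t)^{n−i} · g(t)^{i} · (Γ(α))^{i} / Γ(iα + n − i + 1) · τ^{iα + n − i} converges, and L(t; τ) ≤ E_α(g(t)·Γ(α)·τ^α) · exp((1/α)·b(t)·τ). -/
open MeasureTheory Real Finset

/-- The Mittag-Leffler function `E_α(z) = ∑_{k=0}^∞ z^k / Γ(kα + 1)`. -/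
noncomputable def mittagLeffler (α z : ℝ) : ℝ := ∑' k : ℕ, z ^ k / Real.Gamma ((k : ℝ) * α + 1)

/-!
Term by term, `C(n,i) Γ(iα+1) α^k k! ≤ Γ(iα+k+1)` for `k = n - i`, because each of the `k` steps
of the recursion `Γ(x+1) = x Γ(x)` multiplies by a factor `iα + j ≥ α (i + j)`. Hence the
`(n, i)` term of `L(t; τ)` is dominated by the `(i, n - i)` term of the Cauchy product of the
series of `E_α(g(t)Γ(α)τ^α)` and of `exp(b(t)τ/α)`, and both series converge: the Mittag-Leffler
series because truncating Euler's integral at `R` gives `Γ(x+1) ≥ R^x e^{-R}`, which beats any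
geometric growth once `R^α` is large.
-/

open Set
open scoped Nat

theorem rpow_mul_exp_neg_le_Gamma_add_one {x R : ℝ} (hx : 0 ≤ x) (hR : 0 ≤ R) :
    R ^ x * exp (-R) ≤ Gamma (x + 1) := by
  have hint : IntegrableOn (fun t : ℝ => exp (-t) * t ^ x) (Ioi 0) := by
    simpa using GammaIntegral_convergent (s := x + 1) (by linarith)
  rw [Gamma_eq_integral (by linarith), add_sub_cancel_right]
  calc R ^ x * exp (-R) = ∫ t in Ioi R, R ^ x * exp (-t) := by
        rw [integral_const_mul, integral_exp_neg_Ioi]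
    _ ≤ ∫ t in Ioi R, exp (-t) * t ^ x :=
        setIntegral_mono_on ((integrableOn_exp_neg_Ioi R).const_mul _)
          (hint.mono_set (Ioi_subset_Ioi hR)) measurableSet_Ioi fun t ht => by
            rw [mul_comm]
            gcongr
            exact ht.le
    _ ≤ ∫ t in Ioi 0, exp (-t) * t ^ x :=
        setIntegral_mono_set hint
          ((ae_restrict_iff' measurableSet_Ioi).mpr (ae_of_all _ fun t ht =>
            mul_nonneg (exp_pos _).le (rpow_nonneg (le_of_lt ht) _)))
          (Ioi_subset_Ioi hR).eventuallyLE

theorem summable_pow_div_Gamma_mul_add_one {α : ℝ} (hα : 0 < α) (z : ℝ) :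
    Summable fun k : ℕ => z ^ k / Gamma (k * α + 1) := by
  set R := (|z| + 1) ^ (1 / α)
  have hRα : R ^ α = |z| + 1 := by
    rw [← rpow_mul (by positivity), one_div_mul_cancel hα.ne', rpow_one]
  have hratio : |z| / (|z| + 1) < 1 := (div_lt_one (by positivity)).mpr (lt_add_one _)
  refine Summable.of_norm_bounded
    ((summable_geometric_of_lt_one (by positivity) hratio).mul_left (exp R)) fun k => ?_
  have hΓ : (|z| + 1) ^ k * exp (-R) ≤ Gamma (k * α + 1) := by
    rw [← hRα, ← rpow_mul_natCast (by positivity), mul_comm α]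
    exact rpow_mul_exp_neg_le_Gamma_add_one (by positivity) (by positivity)
  rw [norm_div, norm_pow, Real.norm_eq_abs, Real.norm_of_nonneg (by positivity)]
  calc |z| ^ k / Gamma (k * α + 1) ≤ |z| ^ k / ((|z| + 1) ^ k * exp (-R)) := by gcongr
    _ = exp R * (|z| / (|z| + 1)) ^ k := by rw [exp_neg, div_pow]; field_simp

theorem add_choose_mul_Gamma_mul_pow_mul_factorial_le {α : ℝ} (hα0 : 0 ≤ α) (hα1 : α ≤ 1)
    (i k : ℕ) :
    ((i + k).choose k : ℝ) * (Gamma (i * α + 1) * α ^ k * k !) ≤ Gamma (i * α + k + 1) := by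
  induction k with
  | zero => simp
  | succ k ih =>
    have hchoose :
        ((i + (k + 1)).choose (k + 1) : ℝ) * (k + 1) = (i + k + 1) * (i + k).choose k := by
      exact_mod_cast (Nat.add_one_mul_choose_eq (i + k) k).symm
    calc ((i + (k + 1)).choose (k + 1) : ℝ) * (Gamma (i * α + 1) * α ^ (k + 1) * (k + 1)!)
        = ((i + k + 1) * α) * ((i + k).choose k * (Gamma (i * α + 1) * α ^ k * k !)) := by
          rw [Nat.factorial_succ]; push_cast
          linear_combination (Gamma (i * α + 1) * α ^ (k + 1) * k !) * hchoose
      _ ≤ (i * α + k + 1) * Gamma (i * α + k + 1) :=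
          mul_le_mul (by nlinarith) ih (by positivity) (by positivity)
      _ = Gamma (i * α + ↑(k + 1) + 1) := by
          rw [show (i : ℝ) * α + ↑(k + 1) + 1 = (i * α + k + 1) + 1 by push_cast; ring,
            Gamma_add_one (s := i * α + k + 1) (by positivity)]

/-- The `(n, i)` term of the double series `L(t; τ)`, with `b = b(t)` and `g = g(t)`. -/
noncomputable def lTerm (α b g τ : ℝ) (n i : ℕ) : ℝ :=
  (n.choose i : ℝ) * b ^ (n - i) * g ^ i * Gamma α ^ i / Gamma (i * α + n - i + 1) *
    τ ^ ((i : ℝ) * α + n - i)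

theorem lTerm_nonneg {α b g τ : ℝ} (hα : 0 < α) (hb : 0 ≤ b) (hg : 0 ≤ g) (hτ : 0 ≤ τ)
    {n i : ℕ} (hi : i ≤ n) : 0 ≤ lTerm α b g τ n i := by
  have hin : (i : ℝ) ≤ n := by exact_mod_cast hi
  have : 0 < (i : ℝ) * α + n - i + 1 := by nlinarith
  unfold lTerm
  positivity

theorem lTerm_le {α b g τ : ℝ} (hα0 : 0 < α) (hα1 : α ≤ 1) (hb : 0 ≤ b) (hg : 0 ≤ g)
    (hτ : 0 ≤ τ) {n i : ℕ} (hi : i ≤ n) :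
    lTerm α b g τ n i ≤
      (g * Gamma α * τ ^ α) ^ i / Gamma (i * α + 1) * ((1 / α * b * τ) ^ (n - i) / (n - i)!) := by
  obtain ⟨k, rfl⟩ := Nat.exists_eq_add_of_le hi
  have hexp : (i : ℝ) * α + ↑(i + k) - i = i * α + k := by push_cast; ring
  have hτpow : τ ^ ((i : ℝ) * α + k) = (τ ^ α) ^ i * τ ^ k := by
    rw [rpow_add_of_nonneg hτ (by positivity) (by positivity), mul_comm (i : ℝ) α,
      rpow_mul_natCast hτ, rpow_natCast]
  have hΓ := add_choose_mul_Gamma_mul_pow_mul_factorial_le hα0.le hα1 i k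
  rw [← Nat.choose_symm_add] at hΓ
  unfold lTerm
  rw [Nat.add_sub_cancel_left, hexp, hτpow]
  have hcoef : ((i + k).choose i : ℝ) / Gamma (i * α + k + 1) ≤
      1 / (Gamma (i * α + 1) * α ^ k * k !) := by
    rw [div_le_div_iff₀ (by positivity) (by positivity)]
    linarith
  calc ((i + k).choose i : ℝ) * b ^ k * g ^ i * Gamma α ^ i / Gamma (i * α + k + 1) *
        ((τ ^ α) ^ i * τ ^ k)
      = (i + k).choose i / Gamma (i * α + k + 1) *
          ((g * Gamma α * τ ^ α) ^ i * (b * τ) ^ k) := by ring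
    _ ≤ 1 / (Gamma (i * α + 1) * α ^ k * k !) * ((g * Gamma α * τ ^ α) ^ i * (b * τ) ^ k) := by
        gcongr
    _ = (g * Gamma α * τ ^ α) ^ i / Gamma (i * α + 1) * ((1 / α * b * τ) ^ k / k !) := by
        rw [mul_assoc (1 / α), mul_pow (1 / α), one_div_pow]
        field_simp

theorem summable_sum_range_and_tsum_le_tsum_mul_tsum {c d : ℕ → ℝ} {f : ℕ → ℕ → ℝ}
    (hc : Summable c) (hd : Summable d) (hc0 : ∀ i, 0 ≤ c i) (hd0 : ∀ k, 0 ≤ d k)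
    (hf0 : ∀ n, ∀ i ≤ n, 0 ≤ f n i) (hf : ∀ n, ∀ i ≤ n, f n i ≤ c i * d (n - i)) :
    Summable (fun n => ∑ i ∈ range (n + 1), f n i) ∧
      ∑' n, ∑ i ∈ range (n + 1), f n i ≤ (∑' i, c i) * ∑' k, d k := by
  have hc' : Summable fun i => ‖c i‖ := hc.congr fun i => (Real.norm_of_nonneg (hc0 i)).symm
  have hd' : Summable fun k => ‖d k‖ := hd.congr fun k => (Real.norm_of_nonneg (hd0 k)).symm
  have hcd := (summable_norm_sum_mul_range_of_summable_norm hc' hd').of_norm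
  have hle : ∀ n, ∑ i ∈ range (n + 1), f n i ≤ ∑ i ∈ range (n + 1), c i * d (n - i) :=
    fun n => sum_le_sum fun i hi => hf n i (Nat.lt_succ_iff.mp (mem_range.mp hi))
  have hsum : Summable fun n => ∑ i ∈ range (n + 1), f n i :=
    hcd.of_nonneg_of_le (fun n => sum_nonneg fun i hi =>
      hf0 n i (Nat.lt_succ_iff.mp (mem_range.mp hi))) hle
  refine ⟨hsum, ?_⟩
  rw [tsum_mul_tsum_eq_tsum_sum_range_of_summable_norm hc' hd']
  exact hsum.tsum_le_tsum hle hcd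

theorem L_series_convergent_and_bounded_general
    (α : ℝ) (hα0 : 0 < α) (hα1 : α < 1)
    (T : EReal)
    (b g : ℝ → ℝ)
    (hb_nonneg : ∀ t : ℝ, 0 ≤ t → (t : EReal) < T → 0 ≤ b t)
    (hg_nonneg : ∀ t : ℝ, 0 ≤ t → (t : EReal) < T → 0 ≤ g t)
    (t τ : ℝ) (ht0 : 0 ≤ t) (htT : (t : EReal) < T) (hτ : 0 ≤ τ) :
    Summable (fun n : ℕ => ∑ i ∈ Finset.range (n + 1),
      (n.choose i : ℝ) * b t ^ (n - i) * g t ^ i *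
        Real.Gamma α ^ i / Real.Gamma ((i : ℝ) * α + (n : ℝ) - (i : ℝ) + 1) *
        τ ^ ((i : ℝ) * α + (n : ℝ) - (i : ℝ))) ∧
    (∑' n : ℕ, ∑ i ∈ Finset.range (n + 1),
      (n.choose i : ℝ) * b t ^ (n - i) * g t ^ i *
        Real.Gamma α ^ i / Real.Gamma ((i : ℝ) * α + (n : ℝ) - (i : ℝ) + 1) *
        τ ^ ((i : ℝ) * α + (n : ℝ) - (i : ℝ))) ≤
      mittagLeffler α (g t * Real.Gamma α * τ ^ α) * Real.exp ((1 / α) * b t * τ) := by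
  have hb := hb_nonneg t ht0 htT
  have hg := hg_nonneg t ht0 htT
  have hz : 0 ≤ g t * Gamma α * τ ^ α := by positivity
  have hw : 0 ≤ 1 / α * b t * τ := by positivity
  obtain ⟨hsum, hle⟩ := summable_sum_range_and_tsum_le_tsum_mul_tsum
    (f := lTerm α (b t) (g t) τ)
    (summable_pow_div_Gamma_mul_add_one hα0 _) (Real.summable_pow_div_factorial _)
    (fun i => by positivity) (fun k => by positivity)
    (fun n i hi => lTerm_nonneg hα0 hb hg hτ hi)
    (fun n i hi => lTerm_le hα0 hα1.le hb hg hτ hi)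
  refine ⟨hsum, hle.trans_eq ?_⟩
  rw [mittagLeffler, Real.exp_eq_exp_ℝ, NormedSpace.exp_eq_tsum_div]

/-- Third claim in the proof of Theorem 2.1: the double series `L(t; τ)` converges and
`L(t; τ) ≤ E_α(g(t)Γ(α)τ^α) · exp((1/α)·b(t)·τ)`. -/
theorem L_series_convergent_and_bounded
    (α : ℝ) (hα0 : 0 < α) (hα1 : α < 1)
    (T : EReal) (hT : 0 < T)
    (b g : ℝ → ℝ)
    (hb_nonneg : ∀ t : ℝ, 0 ≤ t → (t : EReal) < T → 0 ≤ b t)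
    (hb_mono : ∀ s t : ℝ, 0 ≤ s → s ≤ t → (t : EReal) < T → b s ≤ b t)
    (hb_cont : ContinuousOn b {t : ℝ | 0 ≤ t ∧ (t : EReal) < T})
    (hg_nonneg : ∀ t : ℝ, 0 ≤ t → (t : EReal) < T → 0 ≤ g t)
    (hg_mono : ∀ s t : ℝ, 0 ≤ s → s ≤ t → (t : EReal) < T → g s ≤ g t)
    (hg_cont : ContinuousOn g {t : ℝ | 0 ≤ t ∧ (t : EReal) < T})
    (t τ : ℝ) (ht0 : 0 ≤ t) (htT : (t : EReal) < T) (hτ : 0 ≤ τ) :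
    Summable (fun n : ℕ => ∑ i ∈ Finset.range (n + 1),
      (n.choose i : ℝ) * b t ^ (n - i) * g t ^ i *
        Real.Gamma α ^ i / Real.Gamma ((i : ℝ) * α + (n : ℝ) - (i : ℝ) + 1) *
        τ ^ ((i : ℝ) * α + (n : ℝ) - (i : ℝ))) ∧
    (∑' n : ℕ, ∑ i ∈ Finset.range (n + 1),
      (n.choose i : ℝ) * b t ^ (n - i) * g t ^ i *
        Real.Gamma α ^ i / Real.Gamma ((i : ℝ) * α + (n : ℝ) - (i : ℝ) + 1) *
        τ ^ ((i : ℝ) * α + (n : ℝ) - (i : ℝ))) ≤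
      mittagLeffler α (g t * Real.Gamma α * τ ^ α) * Real.exp ((1 / α) * b t * τ) :=
  L_series_convergent_and_bounded_general α hα0 hα1 T b g hb_nonneg hg_nonneg t τ ht0 htT hτ
end

section
/- Let 0 < α < 1 and I = [0, T) with 0 < T ≤ ∞. Let a : I → ℝ be nonnegative and locally integrable on I, and let M > 0. Then for every t ∈ I, the double series ∑_{n=1}^{∞} ∑_{i=0}^{n} C(n,i) · M^{n} · (Γ(α))^{i} / Γ(iα + n − i) · ∫₀ᵗ (t − s)^{iα + n − i − 1} a(s) ds converges to a finite value. -/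
/-!
Every exponent `x = iα + (n + 1) - i` lies in `[(n + 1)α, n + 1]`, so the `i`-th summand is at
most `C(n+1, i) · A · c ^ (n + 1) / Γ(x)` with `A = ∫₀ᵗ a` and `c = M · max 1 Γ(α) · max 1 t`.
Since `Γ(x) ≥ ⌊x - 1⌋!` outgrows every exponential and `x ≥ (n + 1)α`, we get
`c ^ (n + 1) / Γ(x) ≤ C · 4 ^ -(n + 1)`; summing the binomial coefficients leaves a geometric
series of ratio `1 / 2`.
-/

open MeasureTheory Real Finset

open Nat in
theorem Real.rpow_le_mul_Gamma {R x : ℝ} (hR : 1 ≤ R) (hx : 2 ≤ x) :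
    R ^ x ≤ R ^ 2 * exp R * Gamma x := by
  set k := ⌊x - 1⌋₊
  have hk_le : (k : ℝ) ≤ x - 1 := Nat.floor_le (by linarith)
  have hk_lt : x - 1 < k + 1 := Nat.lt_floor_add_one _
  have hk_one : (1 : ℝ) ≤ k := by exact_mod_cast Nat.le_floor (by push_cast; linarith)
  have hfac : (k ! : ℝ) ≤ Gamma x := by
    rw [← Gamma_nat_eq_factorial]
    exact Gamma_strictMonoOn_Ici.monotoneOn (Set.mem_Ici.2 (by linarith))
      (Set.mem_Ici.2 hx) (by linarith)
  have hpow : R ^ k ≤ exp R * k ! :=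
    (div_le_iff₀ (by positivity)).1 (pow_div_factorial_le_exp R (by linarith) k)
  calc R ^ x ≤ R ^ ((k : ℝ) + 2) := rpow_le_rpow_of_exponent_le hR (by linarith)
    _ = R ^ 2 * R ^ k := by rw [rpow_add (by linarith), rpow_natCast, rpow_two, mul_comm]
    _ ≤ R ^ 2 * (exp R * k !) := by gcongr
    _ ≤ R ^ 2 * exp R * Gamma x := by rw [← mul_assoc]; gcongr

theorem Real.exists_pow_div_Gamma_le {α c r : ℝ} (hα : 0 < α) (hc : 0 ≤ c) (hr : 0 < r) :
    ∃ C, ∀ (N : ℕ) (x : ℝ), 2 ≤ x → N * α ≤ x → c ^ N / Gamma x ≤ C * r ^ N := by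
  set R := max 1 ((c / r) ^ α⁻¹)
  refine ⟨R ^ 2 * exp R, fun N x hx hNx => ?_⟩
  have hR : 1 ≤ R := le_max_left _ _
  have hcr : (c / r) ^ N ≤ R ^ x :=
    calc (c / r) ^ N = ((c / r) ^ α⁻¹) ^ (N * α) := by
          rw [← rpow_mul (by positivity), mul_comm, mul_inv_cancel_right₀ hα.ne',
            rpow_natCast]
      _ ≤ R ^ (N * α) := rpow_le_rpow (by positivity) (le_max_right _ _) (by positivity)
      _ ≤ R ^ x := rpow_le_rpow_of_exponent_le hR hNx
  rw [div_pow, div_le_iff₀ (by positivity)] at hcr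
  rw [div_le_iff₀ (Gamma_pos_of_pos (by linarith))]
  calc c ^ N ≤ R ^ x * r ^ N := hcr
    _ ≤ R ^ 2 * exp R * Gamma x * r ^ N := by gcongr; exact rpow_le_mul_Gamma hR hx
    _ = _ := by ring

theorem abs_integral_sub_rpow_mul_le {a : ℝ → ℝ} {t β : ℝ} (ht : 0 ≤ t) (hβ : 0 ≤ β)
    (ha : ∀ s ∈ Set.Icc 0 t, 0 ≤ a s) (hint : IntervalIntegrable a volume 0 t) :
    |∫ s in (0:ℝ)..t, (t - s) ^ β * a s| ≤ t ^ β * ∫ s in (0:ℝ)..t, a s := by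
  have hbound : ∀ᵐ s ∂volume.restrict (Set.uIoc 0 t), ‖(t - s) ^ β * a s‖ ≤ t ^ β * a s := by
    rw [Set.uIoc_of_le ht]
    refine (ae_restrict_iff' measurableSet_Ioc).2 (.of_forall fun s hs => ?_)
    have has : 0 ≤ a s := ha s (Set.Ioc_subset_Icc_self hs)
    have hts : 0 ≤ t - s := sub_nonneg.2 hs.2
    rw [norm_mul, norm_of_nonneg (rpow_nonneg hts _), norm_of_nonneg has]
    exact mul_le_mul_of_nonneg_right (rpow_le_rpow hts (by linarith [hs.1]) hβ) has
  have hA : 0 ≤ ∫ s in (0:ℝ)..t, a s := intervalIntegral.integral_nonneg ht ha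
  calc |∫ s in (0:ℝ)..t, (t - s) ^ β * a s| ≤ |∫ s in (0:ℝ)..t, t ^ β * a s| :=
        intervalIntegral.norm_integral_le_abs_of_norm_le hbound (hint.const_mul _)
    _ = t ^ β * ∫ s in (0:ℝ)..t, a s := by
        rw [intervalIntegral.integral_const_mul, abs_of_nonneg (by positivity)]

theorem abs_mixed_gronwall_summand_le {α M t : ℝ} {a : ℝ → ℝ} {n i : ℕ} (hα0 : 0 ≤ α) (hα1 : α ≤ 1)
    (hM : 0 ≤ M) (ht : 0 ≤ t) (ha : ∀ s ∈ Set.Icc 0 t, 0 ≤ a s)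
    (hint : IntervalIntegrable a volume 0 t) (hi : i ≤ n + 1)
    (hx : 1 ≤ (i : ℝ) * α + ((n : ℝ) + 1) - i) :
    |((n + 1).choose i : ℝ) * M ^ (n + 1) *
        Gamma α ^ i / Gamma ((i : ℝ) * α + ((n : ℝ) + 1) - i) *
        ∫ s in (0:ℝ)..t, (t - s) ^ ((i : ℝ) * α + ((n : ℝ) + 1) - i - 1) * a s| ≤
      ((n + 1).choose i : ℝ) * (∫ s in (0:ℝ)..t, a s) *
        ((M * max 1 (Gamma α) * max 1 t) ^ (n + 1) /
          Gamma ((i : ℝ) * α + ((n : ℝ) + 1) - i)) := by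
  set x := (i : ℝ) * α + ((n : ℝ) + 1) - i
  have hi' : (i : ℝ) ≤ n + 1 := by exact_mod_cast hi
  have hΓx : 0 < Gamma x := Gamma_pos_of_pos (by linarith)
  have hΓα : 0 ≤ Gamma α := Gamma_nonneg_of_nonneg hα0
  have hA : 0 ≤ ∫ s in (0:ℝ)..t, a s := intervalIntegral.integral_nonneg ht ha
  have hΓα_pow : Gamma α ^ i ≤ max 1 (Gamma α) ^ (n + 1) :=
    (pow_le_pow_left₀ hΓα (le_max_right _ _) i).trans
      (pow_le_pow_right₀ (le_max_left _ _) hi)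
  have ht_pow : t ^ (x - 1) ≤ max 1 t ^ (n + 1) := by
    calc t ^ (x - 1) ≤ max 1 t ^ (x - 1) := rpow_le_rpow ht (le_max_right _ _) (by linarith)
      _ ≤ max 1 t ^ ((n + 1 : ℕ) : ℝ) :=
          rpow_le_rpow_of_exponent_le (le_max_left _ _) (by push_cast; nlinarith)
      _ = max 1 t ^ (n + 1) := rpow_natCast _ _
  calc _ = ((n + 1).choose i : ℝ) * M ^ (n + 1) * Gamma α ^ i / Gamma x *
        |∫ s in (0:ℝ)..t, (t - s) ^ (x - 1) * a s| := by
        rw [abs_mul, abs_of_nonneg (by positivity)]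
    _ ≤ ((n + 1).choose i : ℝ) * M ^ (n + 1) * max 1 (Gamma α) ^ (n + 1) / Gamma x *
        (max 1 t ^ (n + 1) * ∫ s in (0:ℝ)..t, a s) := by
        gcongr
        exact (abs_integral_sub_rpow_mul_le ht (by linarith) ha hint).trans
          (by gcongr)
    _ = _ := by rw [mul_pow, mul_pow]; ring

theorem rhs_series_summable_general
    (α : ℝ) (hα0 : 0 < α) (hα1 : α < 1)
    (T : EReal)
    (a : ℝ → ℝ) (M : ℝ) (hM : 0 < M)
    (ha_nonneg : ∀ t : ℝ, 0 ≤ t → (t : EReal) < T → 0 ≤ a t)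
    (ha_int : ∀ t : ℝ, 0 ≤ t → (t : EReal) < T → IntervalIntegrable a volume 0 t) :
    ∀ t : ℝ, 0 ≤ t → (t : EReal) < T →
      Summable (fun n : ℕ => ∑ i ∈ Finset.range (n + 2),
        ((n + 1).choose i : ℝ) * M ^ (n + 1) *
          Real.Gamma α ^ i / Real.Gamma ((i : ℝ) * α + ((n : ℝ) + 1) - (i : ℝ)) *
          ∫ s in (0:ℝ)..t, (t - s) ^ ((i : ℝ) * α + ((n : ℝ) + 1) - (i : ℝ) - 1) * a s) := by
  intro t ht htT
  have ha : ∀ s ∈ Set.Icc 0 t, 0 ≤ a s := fun s hs =>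
    ha_nonneg s hs.1 ((EReal.coe_le_coe_iff.2 hs.2).trans_lt htT)
  set A := ∫ s in (0:ℝ)..t, a s
  have hA : 0 ≤ A := intervalIntegral.integral_nonneg ht ha
  set c := M * max 1 (Gamma α) * max 1 t
  obtain ⟨C, hC⟩ := exists_pow_div_Gamma_le hα0 (by positivity : 0 ≤ c)
    (by norm_num : (0 : ℝ) < 1 / 4)
  refine .of_norm_bounded_eventually_nat
    (((summable_nat_add_iff 1).2 summable_geometric_two).mul_left (A * C)) ?_
  filter_upwards [Filter.eventually_ge_atTop ⌈2 / α⌉₊] with n hn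
  have hn2 : 2 ≤ ((n + 1 : ℕ) : ℝ) * α := by
    have h := (div_le_iff₀ hα0).1 (Nat.ceil_le.1 hn)
    push_cast; linarith
  have hx : ∀ i ∈ range (n + 2), ((n + 1 : ℕ) : ℝ) * α ≤ (i : ℝ) * α + ((n : ℝ) + 1) - i := by
    intro i hi
    have hi' : (i : ℝ) ≤ n + 1 := by exact_mod_cast Nat.lt_succ_iff.1 (mem_range.1 hi)
    push_cast; nlinarith
  rw [norm_eq_abs]
  calc _ ≤ ∑ i ∈ range (n + 2), ((n + 1).choose i : ℝ) * A *
        (c ^ (n + 1) / Gamma ((i : ℝ) * α + ((n : ℝ) + 1) - i)) := by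
        refine (abs_sum_le_sum_abs _ _).trans (sum_le_sum fun i hi => ?_)
        exact abs_mixed_gronwall_summand_le hα0.le hα1.le hM.le ht ha (ha_int t ht htT)
          (Nat.lt_succ_iff.1 (mem_range.1 hi)) (by linarith [hx i hi])
    _ ≤ ∑ i ∈ range (n + 2), ((n + 1).choose i : ℝ) * A * (C * (1 / 4) ^ (n + 1)) := by
        gcongr with i hi
        exact hC _ _ (hn2.trans (hx i hi)) (hx i hi)
    _ = A * C * (1 / 2) ^ (n + 1) := by
        rw [← sum_mul, ← sum_mul, ← Nat.cast_sum, Nat.sum_range_choose]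
        rw [show (1 / 2 : ℝ) ^ (n + 1) = 2 ^ (n + 1) * (1 / 4) ^ (n + 1) by
          rw [← mul_pow]; norm_num]
        push_cast; ring

/-- Finiteness of the right-hand side of the mixed Gronwall-Bellman inequality
(third claim in the proof of Theorem 2.1, with `b(t), g(t) ≤ M`). -/
theorem rhs_series_summable
    (α : ℝ) (hα0 : 0 < α) (hα1 : α < 1)
    (T : EReal) (hT : 0 < T)
    (a : ℝ → ℝ) (M : ℝ) (hM : 0 < M)
    (ha_nonneg : ∀ t : ℝ, 0 ≤ t → (t : EReal) < T → 0 ≤ a t)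
    (ha_int : ∀ t : ℝ, 0 ≤ t → (t : EReal) < T → IntervalIntegrable a volume 0 t) :
    ∀ t : ℝ, 0 ≤ t → (t : EReal) < T →
      Summable (fun n : ℕ => ∑ i ∈ Finset.range (n + 2),
        ((n + 1).choose i : ℝ) * M ^ (n + 1) *
          Real.Gamma α ^ i / Real.Gamma ((i : ℝ) * α + ((n : ℝ) + 1) - (i : ℝ)) *
          ∫ s in (0:ℝ)..t, (t - s) ^ ((i : ℝ) * α + ((n : ℝ) + 1) - (i : ℝ) - 1) * a s) :=
  rhs_series_summable_general α hα0 hα1 T a M hM ha_nonneg ha_int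
end
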